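/- arXiv:1203.2059 — 8 statements merged into one kernel-verified Lean document; each statement's English description precedes it below -/
import Mathlib

section
/- Let H : ℕ → ℝ → ℝ and κ : ℕ → ℝ → ℝ be functions satisfying the harmonic-curvature recursion H 0 = 0, H 1 = κ 1 / κ 2, and for all i with 2 ≤ i, H i = (deriv (H (i-1)) + H (i-2) * κ i) / κ (i+1) (pointwise in the parameter). Suppose that for every i ∈ {1,...,m}, the ratio κ (2*i-1) / κ (2*i) is a constant function and each κ j is nowhere zero and differentiable. Then for all i with 1 ≤ i ≤ m, H (2*i) = 0 identically. -/
/-- Harmonic-curvature recursion with constant odd/even curvature ratios: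
the even-indexed harmonic curvatures `H (2*i)` vanish identically. -/
theorem even_harmonic_curvatures_vanish
    (m : ℕ) (H κ : ℕ → ℝ → ℝ)
    (hH0 : H 0 = 0)
    (hH1 : H 1 = fun s => κ 1 s / κ 2 s)
    (hHrec : ∀ i, 2 ≤ i →
      H i = fun s => (deriv (H (i - 1)) s + H (i - 2) s * κ i s) / κ (i + 1) s)
    (hκ0 : ∀ j s, κ j s ≠ 0)
    (hκdiff : ∀ j, Differentiable ℝ (κ j))
    (hconst : ∀ i, 1 ≤ i → i ≤ m → ∃ c : ℝ, ∀ s, κ (2 * i - 1) s / κ (2 * i) s = c) :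
    ∀ i, 1 ≤ i → i ≤ m → H (2 * i) = 0 := by
  have key : ∀ i, 1 ≤ i → i ≤ m →
      (∃ c : ℝ, H (2 * i - 1) = fun _ => c) ∧ H (2 * i) = 0 := by
    intro i
    induction i with
    | zero => intro h; omega
    | succ n ih =>
      intro _ hle
      rcases Nat.eq_zero_or_pos n with hn | hn
      · subst hn
        obtain ⟨c, hc⟩ := hconst 1 le_rfl (by omega)
        have h1 : H 1 = fun _ => c := by
          funext s; rw [hH1]; exact hc s
        have e1 : 2 * 1 - 1 = 1 := by norm_num
        refine ⟨⟨c, by rw [e1]; exact h1⟩, ?_⟩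
        have h2 := hHrec 2 le_rfl
        have : (2 : ℕ) * 1 = 2 := by norm_num
        rw [this]
        funext s
        rw [h2]
        show (deriv (H (2 - 1)) s + H (2 - 2) s * κ 2 s) / κ 3 s = 0
        norm_num [h1, hH0]
      · obtain ⟨⟨c, hco⟩, hze⟩ := ih hn (by omega)
        obtain ⟨c', hc'⟩ := hconst (n + 1) (by omega) hle
        have h3 := hHrec (2 * n + 1) (by omega)
        have e2 : 2 * n + 1 - 1 = 2 * n := by omega
        have e3 : 2 * n + 1 - 2 = 2 * n - 1 := by omega
        rw [e2, e3] at h3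
        have hodd : H (2 * n + 1) = fun _ => c * c' := by
          funext s
          rw [h3, hze, hco]
          show (deriv (0 : ℝ → ℝ) s + c * κ (2 * n + 1) s) / κ (2 * n + 1 + 1) s = c * c'
          have hd : deriv (0 : ℝ → ℝ) s = 0 := deriv_const s 0
          rw [hd]
          have e4 : 2 * (n + 1) - 1 = 2 * n + 1 := by omega
          have e5 : 2 * (n + 1) = 2 * n + 2 := by omega
          have := hc' s
          rw [e4, e5] at this
          rw [zero_add, mul_div_assoc, this]
        have h4 := hHrec (2 * n + 2) (by omega)
        have e6 : 2 * n + 2 - 1 = 2 * n + 1 := by omega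
        have e7 : 2 * n + 2 - 2 = 2 * n := by omega
        rw [e6, e7] at h4
        have heven : H (2 * n + 2) = 0 := by
          funext s
          rw [h4, hodd, hze]
          show (deriv (fun _ : ℝ => c * c') s + (0 : ℝ → ℝ) s * κ (2 * n + 2) s) / κ (2 * n + 2 + 1) s = (0 : ℝ → ℝ) s
          simp
        have e8 : 2 * (n + 1) - 1 = 2 * n + 1 := by omega
        have e9 : 2 * (n + 1) = 2 * n + 2 := by omega
        exact ⟨⟨c * c', by rw [e8]; exact hodd⟩, by rw [e9]; exact heven⟩
  intro i h1 h2
  exact (key i h1 h2).2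
end

section
/- Let v : Fin n → ℝ → EuclideanSpace ℝ (Fin n) be a Frenet frame along a unit-speed curve in Eⁿ, satisfying the Frenet equations v₁' = κ₁ v₂, vᵢ' = -κ_{i-1} v_{i-1} + κᵢ v_{i+1} for 1 < i < n, and vₙ' = -κ_{n-1} v_{n-1}, with all κᵢ nowhere zero. Let X be a constant (parallel) unit vector with ⟨v₁(s), X⟩ = cos φ for all s. Then for every i with 1 ≤ i ≤ n-2 and every s, ⟨v_{i+2}(s), X⟩ = Hᵢ(s) · cos φ, where the Hᵢ are the harmonic curvatures. -/
/-- If the tangent of a Frenet curve makes constant angle φ with a constant unit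
vector X, then ⟨v_{i+2}, X⟩ = Hᵢ · cos φ for 1 ≤ i ≤ n-2. -/
theorem helix_axis_components
    (n : ℕ) (hn : 3 ≤ n)
    (v : ℕ → ℝ → EuclideanSpace ℝ (Fin n)) (κ H : ℕ → ℝ → ℝ)
    (hκ0 : ∀ j, 1 ≤ j → j ≤ n - 1 → ∀ s, κ j s ≠ 0)
    (hκsmooth : ∀ j, ContDiff ℝ (⊤ : ℕ∞) (κ j))
    (horth : ∀ s, ∀ i j, 1 ≤ i → i ≤ n → 1 ≤ j → j ≤ n →
      (inner ℝ (v i s) (v j s) : ℝ) = if i = j then 1 else 0)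
    (hfrenet1 : ∀ s, HasDerivAt (v 1) (κ 1 s • v 2 s) s)
    (hfrenetmid : ∀ i, 1 < i → i < n → ∀ s,
      HasDerivAt (v i) (-(κ (i - 1) s) • v (i - 1) s + κ i s • v (i + 1) s) s)
    (hfrenetn : ∀ s, HasDerivAt (v n) (-(κ (n - 1) s) • v (n - 1) s) s)
    (hH0 : H 0 = 0)
    (hH1 : H 1 = fun s => κ 1 s / κ 2 s)
    (hHrec : ∀ i, 2 ≤ i → i ≤ n - 2 →
      H i = fun s => (deriv (H (i - 1)) s + H (i - 2) s * κ i s) / κ (i + 1) s)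
    (X : EuclideanSpace ℝ (Fin n)) (hX : ‖X‖ = 1) (φ : ℝ)
    (haxis : ∀ s, (inner ℝ (v 1 s) X : ℝ) = Real.cos φ) :
    ∀ i, 1 ≤ i → i ≤ n - 2 → ∀ s,
      (inner ℝ (v (i + 2) s) X : ℝ) = H i s * Real.cos φ := by
  have dinner : ∀ j (w : EuclideanSpace ℝ (Fin n)) s, HasDerivAt (v j) w s →
      HasDerivAt (fun t => (inner ℝ (v j t) X : ℝ)) ((inner ℝ w X : ℝ)) s := by
    intro j w s h
    have h1 := ((innerSL ℝ X).hasFDerivAt (x := v j s)).comp_hasDerivAt s h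
    simp only [innerSL_apply_apply, Function.comp] at h1
    rw [show (inner ℝ w X : ℝ) = inner ℝ X w from real_inner_comm _ _]
    exact h1.congr_of_eventuallyEq
      (by filter_upwards with t; exact real_inner_comm _ _)
  -- ⟨v 2, X⟩ = 0
  have hf2 : ∀ s, (inner ℝ (v 2 s) X : ℝ) = 0 := by
    intro s
    have h1 : HasDerivAt (fun t => (inner ℝ (v 1 t) X : ℝ))
        (inner ℝ (κ 1 s • v 2 s) X : ℝ) s := dinner 1 _ s (hfrenet1 s)
    have h2 : HasDerivAt (fun t => (inner ℝ (v 1 t) X : ℝ)) 0 s := by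
      have : (fun t => (inner ℝ (v 1 t) X : ℝ)) = fun _ => Real.cos φ :=
        funext fun t => haxis t
      rw [this]; exact hasDerivAt_const _ _
    have h3 := h1.unique h2
    rw [real_inner_smul_left] at h3
    exact (mul_eq_zero.mp h3).resolve_left (hκ0 1 le_rfl (by omega) s)
  -- strong induction
  have key : ∀ i, i ≤ n - 2 → ∀ s, (inner ℝ (v (i + 2) s) X : ℝ) = H i s * Real.cos φ := by
    intro i
    induction i using Nat.strong_induction_on with
    | _ i ih =>
      match i with
      | 0 => intro _ s; rw [hH0]; simpa using hf2 s
      | 1 =>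
        intro hi s
        have hd := hfrenetmid 2 (by norm_num) (by omega) s
        have e1 : (2 : ℕ) - 1 = 1 := rfl
        have e2 : (2 : ℕ) + 1 = 3 := rfl
        rw [e1, e2] at hd
        have h1 := dinner 2 _ s hd
        have h2 : HasDerivAt (fun t => (inner ℝ (v 2 t) X : ℝ)) 0 s := by
          have : (fun t => (inner ℝ (v 2 t) X : ℝ)) = fun _ => (0:ℝ) := funext hf2
          rw [this]; exact hasDerivAt_const _ _
        have heq := h1.unique h2
        rw [inner_add_left, real_inner_smul_left, real_inner_smul_left,
          haxis s] at heq
        have hκ2 : κ 2 s ≠ 0 := hκ0 2 (by omega) (by omega) s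
        simp only [hH1]
        have e3 : (1 : ℕ) + 2 = 3 := rfl
        rw [e3, div_mul_eq_mul_div, eq_div_iff hκ2]
        linarith
      | (m + 2) =>
        intro hi s
        have ih1 : ∀ t, (inner ℝ (v (m + 3) t) X : ℝ) = H (m + 1) t * Real.cos φ := by
          intro t
          have := ih (m + 1) (by omega) (by omega) t
          simpa using this
        have ih2 : (inner ℝ (v (m + 2) s) X : ℝ) = H m s * Real.cos φ := by
          have := ih m (by omega) (by omega) s
          simpa using this
        have hd := hfrenetmid (m + 3) (by omega) (by omega) s
        have e1 : m + 3 - 1 = m + 2 := rfl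
        have e2 : m + 3 + 1 = m + 4 := rfl
        rw [e1, e2] at hd
        have h1 := dinner (m + 3) _ s hd
        have hfun : (fun t => (inner ℝ (v (m + 3) t) X : ℝ))
            = fun t => H (m + 1) t * Real.cos φ := funext ih1
        have hderiv2 : deriv (fun t => (inner ℝ (v (m + 3) t) X : ℝ)) s
            = deriv (H (m + 1)) s * Real.cos φ := by
          rw [hfun, deriv_mul_const_field]
        have heq := h1.deriv.symm.trans hderiv2
        rw [inner_add_left, real_inner_smul_left, real_inner_smul_left, ih2] at heq
        have hκ : κ (m + 3) s ≠ 0 := hκ0 (m + 3) (by omega) (by omega) s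
        have hrec := hHrec (m + 2) (by omega) hi
        have e3 : m + 2 - 1 = m + 1 := rfl
        have e4 : m + 2 - 2 = m := rfl
        rw [e3, e4] at hrec
        simp only [hrec]
        have e5 : m + 2 + 2 = m + 4 := rfl
        rw [e5, div_mul_eq_mul_div, eq_div_iff hκ]
        ring_nf
        ring_nf at heq
        linarith
  intro i _ hi s
  exact key i hi s
end

section
/- Let {v₁,…,vₙ} be a Frenet frame in Eⁿ with Frenet equations as above and nowhere-vanishing curvatures, and let X be a constant unit vector such that ⟨v₁(s), X⟩ = cos φ ≠ 0 for all s. Then X admits the expansion X = cos φ · (v₁(s) + Σ_{j=1}^{n-2} Hⱼ(s) v_{j+2}(s)) for every s, and in particular ⟨v₂(s), X⟩ = 0 for all s. -/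
/-- A constant unit axis X with ⟨v₁, X⟩ = cos φ ≠ 0 expands as
X = cos φ · (v₁ + Σ Hⱼ v_{j+2}), and ⟨v₂, X⟩ = 0. -/
theorem helix_axis_expansion
    (n : ℕ) (hn : 3 ≤ n)
    (v : ℕ → ℝ → EuclideanSpace ℝ (Fin n)) (κ H : ℕ → ℝ → ℝ)
    (hκ0 : ∀ j, 1 ≤ j → j ≤ n - 1 → ∀ s, κ j s ≠ 0)
    (hκsmooth : ∀ j, ContDiff ℝ (⊤ : ℕ∞) (κ j))
    (horth : ∀ s, ∀ i j, 1 ≤ i → i ≤ n → 1 ≤ j → j ≤ n →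
      (inner ℝ (v i s) (v j s) : ℝ) = if i = j then 1 else 0)
    (hfrenet1 : ∀ s, HasDerivAt (v 1) (κ 1 s • v 2 s) s)
    (hfrenetmid : ∀ i, 1 < i → i < n → ∀ s,
      HasDerivAt (v i) (-(κ (i - 1) s) • v (i - 1) s + κ i s • v (i + 1) s) s)
    (hfrenetn : ∀ s, HasDerivAt (v n) (-(κ (n - 1) s) • v (n - 1) s) s)
    (hH0 : H 0 = 0)
    (hH1 : H 1 = fun s => κ 1 s / κ 2 s)
    (hHrec : ∀ i, 2 ≤ i → i ≤ n - 2 →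
      H i = fun s => (deriv (H (i - 1)) s + H (i - 2) s * κ i s) / κ (i + 1) s)
    (X : EuclideanSpace ℝ (Fin n)) (hX : ‖X‖ = 1) (φ : ℝ)
    (hφ : Real.cos φ ≠ 0)
    (haxis : ∀ s, (inner ℝ (v 1 s) X : ℝ) = Real.cos φ) :
    (∀ s, X = Real.cos φ •
        (v 1 s + ∑ j ∈ Finset.Icc 1 (n - 2), H j s • v (j + 2) s)) ∧
    (∀ s, (inner ℝ (v 2 s) X : ℝ) = 0) := by
  -- derivative of inner products with the constant X
  have hd : ∀ (i : ℕ) (w : EuclideanSpace ℝ (Fin n)) (s : ℝ), HasDerivAt (v i) w s →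
      HasDerivAt (fun t => (inner ℝ (v i t) X : ℝ)) (inner ℝ w X : ℝ) s := by
    intro i w s h
    have := h.inner ℝ (hasDerivAt_const s X)
    simpa using this
  -- ⟨v₂, X⟩ = 0
  have ha2 : ∀ s, (inner ℝ (v 2 s) X : ℝ) = 0 := by
    intro s
    have h1 := hd 1 _ s (hfrenet1 s)
    have hc : (fun t => (inner ℝ (v 1 t) X : ℝ)) = fun _ => Real.cos φ := funext haxis
    have h0 : HasDerivAt (fun t => (inner ℝ (v 1 t) X : ℝ)) 0 s := by
      rw [hc]; exact hasDerivAt_const s _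
    have h2 := h1.unique h0
    rw [real_inner_smul_left] at h2
    exact (mul_eq_zero.mp h2).resolve_left (hκ0 1 le_rfl (by omega) s)
  -- key expansion of coefficients
  have key : ∀ j, j ≤ n - 2 → ∀ s,
      (inner ℝ (v (j + 2) s) X : ℝ) = Real.cos φ * H j s := by
    intro j
    induction j using Nat.strong_induction_on with
    | _ j ih =>
      match j with
      | 0 =>
        intro _ s
        rw [hH0]; simp [ha2 s]
      | 1 =>
        intro h1n s
        have hfr := hfrenetmid 2 (by omega) (by omega) s
        have hder := hd 2 _ s hfr
        have hc : (fun t => (inner ℝ (v 2 t) X : ℝ)) = fun _ => (0:ℝ) := funext ha2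
        have h0 : HasDerivAt (fun t => (inner ℝ (v 2 t) X : ℝ)) 0 s := by
          rw [hc]; exact hasDerivAt_const s _
        have h2 := hder.unique h0
        rw [inner_add_left, real_inner_smul_left, real_inner_smul_left] at h2
        rw [show (2:ℕ) - 1 = 1 from rfl, haxis s] at h2
        rw [hH1, show (1:ℕ) + 2 = 2 + 1 from rfl]
        set A : ℝ := (inner ℝ (v (2 + 1) s) X : ℝ) with hA
        have hκ2 := hκ0 2 (by omega) (by omega) s
        field_simp
        linarith [h2]
      | (k+2) =>
        intro hjn s
        have hk1 : ∀ t, (inner ℝ (v (k + 3) t) X : ℝ) = Real.cos φ * H (k + 1) t :=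
          ih (k + 1) (by omega) (by omega)
        have hk0 : (inner ℝ (v (k + 2) s) X : ℝ) = Real.cos φ * H k s :=
          ih k (by omega) (by omega) s
        have hfr := hfrenetmid (k + 3) (by omega) (by omega) s
        have hder := hd (k + 3) _ s hfr
        simp only [show k + 3 - 1 = k + 2 from rfl] at hder
        set D : ℝ := (inner ℝ (-(κ (k + 2) s) • v (k + 2) s + κ (k + 3) s • v (k + 3 + 1) s) X : ℝ)
          with hD
        have hc : (fun t => (inner ℝ (v (k + 3) t) X : ℝ)) = fun t => Real.cos φ * H (k + 1) t :=
          funext hk1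
        rw [hc] at hder
        have hH' : HasDerivAt (H (k + 1)) ((Real.cos φ)⁻¹ * D) s := by
          have h3 := hder.const_mul (Real.cos φ)⁻¹
          have he : (fun t => (Real.cos φ)⁻¹ * (Real.cos φ * H (k + 1) t)) = H (k + 1) := by
            funext t; field_simp
          rwa [he] at h3
        have hdval : deriv (H (k + 1)) s = (Real.cos φ)⁻¹ * D := hH'.deriv
        have hgoal : H (k + 2) s
            = (deriv (H (k + 1)) s + H k s * κ (k + 2) s) / κ (k + 3) s := by
          rw [hHrec (k + 2) (by omega) (by omega)]
          rfl
        rw [show k + 2 + 2 = k + 3 + 1 from rfl]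
        rw [hgoal, hdval, hD]
        rw [inner_add_left, real_inner_smul_left, real_inner_smul_left, hk0]
        set A : ℝ := (inner ℝ (v (k + 3 + 1) s) X : ℝ) with hA
        have hκ3 := hκ0 (k + 3) (by omega) (by omega) s
        field_simp
        ring
  refine ⟨?_, ha2⟩
  intro s
  have hON : Orthonormal ℝ (fun k : Fin n => v (k + 1) s) := by
    rw [orthonormal_iff_ite]
    intro i j
    have hi := i.isLt
    have hj := j.isLt
    have := horth s ((i : ℕ) + 1) ((j : ℕ) + 1) (by omega) (by omega) (by omega) (by omega)
    rw [this]
    congr 1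
    simp [Fin.val_inj, Nat.add_right_cancel_iff]
  have hne : Nonempty (Fin n) := ⟨⟨0, by omega⟩⟩
  have hspan : ⊤ ≤ Submodule.span ℝ (Set.range (fun k : Fin n => v (k + 1) s)) := by
    rw [hON.linearIndependent.span_eq_top_of_card_eq_finrank (by simp)]
  let b : OrthonormalBasis (Fin n) ℝ (EuclideanSpace ℝ (Fin n)) :=
    OrthonormalBasis.mk hON hspan
  have hexp : ∑ i : Fin n, (inner ℝ (v ((i : ℕ) + 1) s) X : ℝ) • v ((i : ℕ) + 1) s = X := by
    have := b.sum_repr X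
    simpa [b, OrthonormalBasis.repr_apply_apply, OrthonormalBasis.coe_mk] using this
  rw [Fin.sum_univ_eq_sum_range (fun k => (inner ℝ (v (k + 1) s) X : ℝ) • v (k + 1) s) n] at hexp
  rw [← hexp, Finset.range_eq_Ico,
    ← Finset.sum_Ico_consecutive _ (by omega : (0:ℕ) ≤ 2) (by omega : 2 ≤ n)]
  have h01 : ∑ k ∈ Finset.Ico 0 2, (inner ℝ (v (k + 1) s) X : ℝ) • v (k + 1) s
      = Real.cos φ • v 1 s := by
    rw [show Finset.Ico 0 2 = ({0, 1} : Finset ℕ) from rfl]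
    rw [Finset.sum_insert (by simp), Finset.sum_singleton]
    rw [show (0:ℕ) + 1 = 1 from rfl, show (1:ℕ) + 1 = 2 from rfl, haxis s, ha2 s]
    simp
  have htail : ∑ k ∈ Finset.Ico 2 n, (inner ℝ (v (k + 1) s) X : ℝ) • v (k + 1) s
      = ∑ j ∈ Finset.Icc 1 (n - 2), (Real.cos φ * H j s) • v (j + 2) s := by
    have hmap : Finset.Ico 2 n = Finset.map (addRightEmbedding 1) (Finset.Icc 1 (n - 2)) := by
      ext x
      simp only [Finset.mem_Ico, Finset.mem_map, Finset.mem_Icc, addRightEmbedding_apply]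
      constructor
      · rintro ⟨h2, hx⟩; exact ⟨x - 1, ⟨by omega, by omega⟩, by omega⟩
      · rintro ⟨a, ⟨ha1, ha2'⟩, rfl⟩; omega
    rw [hmap, Finset.sum_map]
    refine Finset.sum_congr rfl ?_
    intro j hjmem
    rw [Finset.mem_Icc] at hjmem
    have hj2 : j ≤ n - 2 := hjmem.2
    have he : (addRightEmbedding 1) j + 1 = j + 2 := by
      simp [addRightEmbedding_apply]
    rw [he, key j hj2 s]
  rw [h01, htail, smul_add, Finset.smul_sum]
  congr 1
  refine Finset.sum_congr rfl ?_
  intro j _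
  rw [smul_smul]
end

section
/- Let {v₁,…,vₙ} be a Frenet frame in Eⁿ with nowhere-vanishing curvatures and harmonic curvatures H₁,…,H_{n-2}. If the curve is a generalized helix, i.e. there exists a constant unit vector X with ⟨v₁(s), X⟩ = cos φ for all s and cos φ ≠ 0, then the function Σ_{j=1}^{n-2} Hⱼ² is constant, equal to tan² φ. -/
/-- For a generalized helix, the sum of squared harmonic curvatures is the
constant tan² φ. -/
theorem helix_sum_harmonic_squares_constant
    (n : ℕ) (hn : 3 ≤ n)
    (v : ℕ → ℝ → EuclideanSpace ℝ (Fin n)) (κ H : ℕ → ℝ → ℝ)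
    (hκ0 : ∀ j, 1 ≤ j → j ≤ n - 1 → ∀ s, κ j s ≠ 0)
    (hκsmooth : ∀ j, ContDiff ℝ (⊤ : ℕ∞) (κ j))
    (horth : ∀ s, ∀ i j, 1 ≤ i → i ≤ n → 1 ≤ j → j ≤ n →
      inner ℝ (v i s) (v j s) = if i = j then 1 else 0)
    (hfrenet1 : ∀ s, HasDerivAt (v 1) (κ 1 s • v 2 s) s)
    (hfrenetmid : ∀ i, 1 < i → i < n → ∀ s,
      HasDerivAt (v i) (-(κ (i - 1) s) • v (i - 1) s + κ i s • v (i + 1) s) s)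
    (hfrenetn : ∀ s, HasDerivAt (v n) (-(κ (n - 1) s) • v (n - 1) s) s)
    (hH0 : H 0 = 0)
    (hH1 : H 1 = fun s => κ 1 s / κ 2 s)
    (hHrec : ∀ i, 2 ≤ i → i ≤ n - 2 →
      H i = fun s => (deriv (H (i - 1)) s + H (i - 2) s * κ i s) / κ (i + 1) s)
    (X : EuclideanSpace ℝ (Fin n)) (hX : ‖X‖ = 1) (φ : ℝ)
    (hφ : Real.cos φ ≠ 0)
    (haxis : ∀ s, inner ℝ (v 1 s) X = Real.cos φ) :
    ∀ s, ∑ j ∈ Finset.Icc 1 (n - 2), (H j s) ^ 2 = Real.tan φ ^ 2 := by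
  -- component functions
  set a : ℕ → ℝ → ℝ := fun i s => (inner ℝ (v i s) X : ℝ) with ha
  -- derivative of a i via Frenet
  have hda : ∀ i s (w : EuclideanSpace ℝ (Fin n)), HasDerivAt (v i) w s →
      HasDerivAt (a i) ((inner ℝ w X : ℝ)) s := by
    intro i s w hw
    have := hw.inner ℝ (hasDerivAt_const s X)
    simpa using this
  -- a 2 = 0
  have ha2 : ∀ s, a 2 s = 0 := by
    intro s
    have h1 : HasDerivAt (a 1) ((inner ℝ (κ 1 s • v 2 s) X : ℝ)) s :=
      hda 1 s _ (hfrenet1 s)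
    have hconst : (a 1) = fun _ => Real.cos φ := funext fun t => haxis t
    have h0 : HasDerivAt (a 1) 0 s := by rw [hconst]; exact hasDerivAt_const s _
    have := h1.unique h0
    rw [real_inner_smul_left] at this
    have hκ1 : κ 1 s ≠ 0 := hκ0 1 le_rfl (by omega) s
    have : κ 1 s * a 2 s = 0 := this
    rcases mul_eq_zero.mp this with h | h
    · exact absurd h hκ1
    · exact h
  -- a 3 = H 1 * cos φ
  have ha3 : ∀ s, a 3 s = H 1 s * Real.cos φ := by
    intro s
    have h2 : HasDerivAt (a 2)
        ((inner ℝ (-(κ (2-1) s) • v (2-1) s + κ 2 s • v (2+1) s) X : ℝ)) s :=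
      hda 2 s _ (hfrenetmid 2 (by omega) (by omega) s)
    have hconst : (a 2) = fun _ => (0:ℝ) := funext fun t => ha2 t
    have h0 : HasDerivAt (a 2) 0 s := by rw [hconst]; exact hasDerivAt_const s _
    have huniq := h2.unique h0
    rw [inner_add_left, real_inner_smul_left, real_inner_smul_left] at huniq
    have hκ2 : κ 2 s ≠ 0 := hκ0 2 (by omega) (by omega) s
    have ha1 : a 1 s = Real.cos φ := haxis s
    simp only [show (2:ℕ) - 1 = 1 from rfl] at huniq
    have : κ 2 s * a 3 s = κ 1 s * Real.cos φ := by
      have : -(κ 1 s) * a 1 s + κ 2 s * a 3 s = 0 := huniq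
      rw [ha1] at this; linarith
    rw [hH1]
    field_simp
    linarith [this]
  -- main induction : a (j+2) = H j * cos φ for j ≤ n - 2
  have key : ∀ j, j ≤ n - 2 → ∀ s, a (j + 2) s = H j s * Real.cos φ := by
    intro j
    induction j using Nat.strong_induction_on with
    | _ j ih =>
      intro hj s
      match j with
      | 0 => rw [hH0]; simpa using ha2 s
      | 1 => exact ha3 s
      | (k+2) =>
        -- H (k+1) = a (k+3) / cos φ
        have hk1 : ∀ t, a (k + 3) t = H (k + 1) t * Real.cos φ := by
          intro t
          have := ih (k+1) (by omega) (by omega) t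
          simpa [show k + 1 + 2 = k + 3 from rfl] using this
        have hk0 : ∀ t, a (k + 2) t = H k t * Real.cos φ := by
          intro t
          exact ih k (by omega) (by omega) t
        have hHfun : H (k+1) = fun t => a (k+3) t / Real.cos φ := by
          funext t
          rw [hk1 t]; field_simp
        -- derivative of a (k+3)
        have hd : HasDerivAt (a (k+3))
            ((inner ℝ (-(κ (k+3-1) s) • v (k+3-1) s + κ (k+3) s • v (k+3+1) s) X : ℝ)) s :=
          hda (k+3) s _ (hfrenetmid (k+3) (by omega) (by omega) s)
        rw [inner_add_left, real_inner_smul_left, real_inner_smul_left] at hd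
        simp only [show k + 3 - 1 = k + 2 from rfl, show k + 3 + 1 = k + 4 from rfl] at hd
        have hderivH : deriv (H (k+1)) s =
            (-(κ (k+2) s) * a (k+2) s + κ (k+3) s * a (k+4) s) / Real.cos φ := by
          rw [hHfun]
          have : HasDerivAt (fun t => a (k+3) t / Real.cos φ)
              ((-(κ (k+2) s) * a (k+2) s + κ (k+3) s * a (k+4) s) / Real.cos φ) s :=
            hd.div_const _
          exact this.deriv
        have hrec := hHrec (k+2) (by omega) (by omega)
        have hκ3 : κ (k+3) s ≠ 0 := hκ0 (k+3) (by omega) (by omega) s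
        have hval : H (k+2) s =
            (deriv (H (k+1)) s + H k s * κ (k+2) s) / κ (k+3) s := by
          rw [hrec]
          norm_num
        rw [hval, hderivH, hk0 s, show k + 2 + 2 = k + 4 from rfl]
        field_simp
        ring
  intro s
  -- orthonormal basis from the frame at s
  have hw : Orthonormal ℝ (fun i : Fin n => v (i + 1) s) := by
    rw [orthonormal_iff_ite]
    intro i j
    have h := horth s (i + 1) (j + 1) (by omega) i.isLt (by omega) j.isLt
    rw [h]
    congr 1
    simp only [eq_iff_iff]
    constructor
    · intro h'; exact Fin.ext (by omega)
    · intro h'; rw [h']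
  have hcard : Fintype.card (Fin n) =
      Module.finrank ℝ (EuclideanSpace ℝ (Fin n)) := by
    simp [finrank_euclideanSpace]
  haveI : Nonempty (Fin n) := ⟨⟨0, by omega⟩⟩
  let b : Module.Basis (Fin n) ℝ (EuclideanSpace ℝ (Fin n)) :=
    basisOfLinearIndependentOfCardEqFinrank hw.linearIndependent hcard
  have hbcoe : ⇑b = fun i : Fin n => v (i + 1) s :=
    coe_basisOfLinearIndependentOfCardEqFinrank _ _
  have hwb : Orthonormal ℝ ⇑b := by rw [hbcoe]; exact hw
  let ob : OrthonormalBasis (Fin n) ℝ (EuclideanSpace ℝ (Fin n)) :=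
    b.toOrthonormalBasis hwb
  have hobcoe : ⇑ob = fun i : Fin n => v (i + 1) s := by
    rw [Module.Basis.coe_toOrthonormalBasis]; exact hbcoe
  have hpars := ob.sum_inner_mul_inner X X
  have hsum : ∑ i : Fin n, (a (i + 1) s) ^ 2 = 1 := by
    have h1 : (inner ℝ X X : ℝ) = 1 := by
      rw [real_inner_self_eq_norm_sq, hX]; norm_num
    rw [h1] at hpars
    rw [← hpars]
    refine Finset.sum_congr rfl fun i _ => ?_
    rw [hobcoe]
    simp only [ha]
    rw [real_inner_comm (v (↑i + 1) s) X]
    ring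
  -- convert the Fin sum to a range sum
  have hsum' : ∑ i ∈ Finset.range n, (a (i + 1) s) ^ 2 = 1 := by
    rw [Finset.sum_range fun i => (a (i + 1) s) ^ 2]
    exact hsum
  -- peel off the first term
  obtain ⟨m, hm⟩ : ∃ m, n = m + 1 := ⟨n - 1, by omega⟩
  rw [hm, Finset.sum_range_succ'] at hsum'
  have ha1 : a (0 + 1) s = Real.cos φ := haxis s
  rw [ha1] at hsum'
  -- terms with i ∈ range m : a (i+2) = H i cos φ
  have hterm : ∀ i ∈ Finset.range m, (a (i + 1 + 1) s) ^ 2 =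
      (H i s) ^ 2 * Real.cos φ ^ 2 := by
    intro i hi
    rw [Finset.mem_range] at hi
    have := key i (by omega) s
    rw [show i + 1 + 1 = i + 2 from rfl, this]
    ring
  rw [Finset.sum_congr rfl hterm] at hsum'
  rw [← Finset.sum_mul] at hsum'
  -- range m = {0} ∪ Icc 1 (n-2), and H 0 = 0
  have hm2 : m = (n - 2) + 1 := by omega
  have hsplit : ∑ i ∈ Finset.range m, (H i s) ^ 2 =
      ∑ j ∈ Finset.Icc 1 (n - 2), (H j s) ^ 2 := by
    rw [hm2, Finset.sum_range_succ']
    rw [hH0]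
    simp only [Pi.zero_apply]
    rw [show (0:ℝ)^2 = 0 by ring, add_zero]
    rw [← Finset.Ico_add_one_right_eq_Icc, Finset.sum_Ico_eq_sum_range]
    rw [show n - 2 + 1 - 1 = n - 2 from rfl]
    exact Finset.sum_congr rfl fun i _ => by rw [add_comm 1 i]
  rw [hsplit] at hsum'
  -- finish
  have hcos2 : Real.cos φ ^ 2 ≠ 0 := pow_ne_zero _ hφ
  have htan : Real.tan φ ^ 2 = Real.sin φ ^ 2 / Real.cos φ ^ 2 := by
    rw [Real.tan_eq_sin_div_cos]; ring
  have hsc := Real.sin_sq_add_cos_sq φ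
  rw [htan]
  field_simp
  nlinarith [hsum']
end

section
/- Let {v₁,…,vₙ} be a Frenet frame in Eⁿ with nowhere-vanishing curvatures, harmonic curvatures H₁,…,H_{n-2}, and define the generalized Darboux vector field D(s) = v₁(s) + Σ_{j=1}^{n-2} Hⱼ(s) v_{j+2}(s). Then the derivative of D satisfies D'(s) = (H'_{n-2}(s) + κ_{n-1}(s) H_{n-3}(s)) · vₙ(s) for all s. -/
/-- The generalized Darboux vector D = v₁ + Σ Hⱼ v_{j+2} has derivative
D' = (H'_{n-2} + κ_{n-1} H_{n-3}) · vₙ. -/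
theorem darboux_derivative
    (n : ℕ) (hn : 3 ≤ n)
    (v : ℕ → ℝ → EuclideanSpace ℝ (Fin n)) (κ H : ℕ → ℝ → ℝ)
    (hκ0 : ∀ j, 1 ≤ j → j ≤ n - 1 → ∀ s, κ j s ≠ 0)
    (hκsmooth : ∀ j, ContDiff ℝ (⊤ : ℕ∞) (κ j))
    (horth : ∀ s, ∀ i j, 1 ≤ i → i ≤ n → 1 ≤ j → j ≤ n →
      (inner ℝ (v i s) (v j s) : ℝ) = if i = j then 1 else 0)
    (hfrenet1 : ∀ s, HasDerivAt (v 1) (κ 1 s • v 2 s) s)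
    (hfrenetmid : ∀ i, 1 < i → i < n → ∀ s,
      HasDerivAt (v i) (-(κ (i - 1) s) • v (i - 1) s + κ i s • v (i + 1) s) s)
    (hfrenetn : ∀ s, HasDerivAt (v n) (-(κ (n - 1) s) • v (n - 1) s) s)
    (hH0 : H 0 = 0)
    (hH1 : H 1 = fun s => κ 1 s / κ 2 s)
    (hHrec : ∀ i, 2 ≤ i → i ≤ n - 2 →
      H i = fun s => (deriv (H (i - 1)) s + H (i - 2) s * κ i s) / κ (i + 1) s)
    (hHdiff : ∀ i, i ≤ n - 2 → Differentiable ℝ (H i))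
    (D : ℝ → EuclideanSpace ℝ (Fin n))
    (hD : ∀ s, D s = v 1 s + ∑ j ∈ Finset.Icc 1 (n - 2), H j s • v (j + 2) s) :
    ∀ s, HasDerivAt D
      ((deriv (H (n - 2)) s + κ (n - 1) s * H (n - 3) s) • v n s) s := by
  obtain ⟨k, rfl⟩ : ∃ k, n = k + 3 := ⟨n - 3, by omega⟩
  have hDf : D = fun s => v 1 s + ∑ j ∈ Finset.Icc 1 (k + 3 - 2), H j s • v (j + 2) s :=
    funext hD
  subst hDf
  have e2 : k + 3 - 2 = k + 1 := by omega
  have e1 : k + 3 - 1 = k + 2 := by omega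
  have e3 : k + 3 - 3 = k := by omega
  simp only [e1, e2, e3]
  intro s
  have key : ∀ m, m ≤ k →
      HasDerivAt (fun t => v 1 t + ∑ j ∈ Finset.Icc 1 m, H j t • v (j + 2) t)
        ((κ (m + 2) s * H (m + 1) s) • v (m + 2) s + (κ (m + 2) s * H m s) • v (m + 3) s) s := by
    intro m
    induction m with
    | zero =>
      intro _
      have heq : (κ (0 + 2) s * H (0 + 1) s) • v (0 + 2) s + (κ (0 + 2) s * H 0 s) • v (0 + 3) s
          = κ 1 s • v 2 s := by
        rw [hH0, hH1]
        simp only [Pi.zero_apply, mul_zero, zero_smul, add_zero, Nat.zero_add]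
        rw [mul_comm, div_mul_cancel₀ _ (hκ0 2 (by omega) (by omega) s)]
      rw [heq]
      have : Finset.Icc 1 0 = (∅ : Finset ℕ) := Finset.Icc_eq_empty (by omega)
      simp only [this, Finset.sum_empty, add_zero]
      exact hfrenet1 s
    | succ m ih =>
      intro hm1
      have prev := ih (by omega)
      have hH : HasDerivAt (H (m + 1)) (deriv (H (m + 1)) s) s :=
        ((hHdiff (m + 1) (by omega)) s).hasDerivAt
      have hv := hfrenetmid (m + 3) (by omega) (by omega) s
      have e : m + 3 - 1 = m + 2 := by omega
      rw [e] at hv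
      have hterm := hH.smul hv
      have hsum := prev.add hterm
      have hfun : (fun t => (v 1 t + ∑ j ∈ Finset.Icc 1 m, H j t • v (j + 2) t)
            + H (m + 1) t • v (m + 3) t)
          = fun t => v 1 t + ∑ j ∈ Finset.Icc 1 (m + 1), H j t • v (j + 2) t := by
        funext t
        rw [Finset.sum_Icc_succ_top (by omega)]
        rw [add_assoc]
      rw [show ((fun t => v 1 t + ∑ j ∈ Finset.Icc 1 m, H j t • v (j + 2) t) + H (m + 1) • v (m + 3)) = _ from hfun] at hsum
      refine hsum.congr_deriv ?_
      have hrec := congrFun (hHrec (m + 2) (by omega) (by omega)) s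
      have er1 : m + 2 - 1 = m + 1 := by omega
      have er2 : m + 2 - 2 = m := by omega
      rw [er1, er2] at hrec
      have hκne := hκ0 (m + 2 + 1) (by omega) (by omega) s
      have hderiv : deriv (H (m + 1)) s
          = κ (m + 2 + 1) s * H (m + 2) s - H m s * κ (m + 2) s := by
        rw [hrec]
        field_simp
        ring
      rw [hderiv]
      module
  have prev := key k le_rfl
  have hH : HasDerivAt (H (k + 1)) (deriv (H (k + 1)) s) s :=
    ((hHdiff (k + 1) (by omega)) s).hasDerivAt
  have hv := hfrenetn s
  rw [e1] at hv
  have hterm := hH.smul hv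
  have hsum := prev.add hterm
  have hfun : (fun t => (v 1 t + ∑ j ∈ Finset.Icc 1 k, H j t • v (j + 2) t)
        + H (k + 1) t • v (k + 3) t)
      = fun t => v 1 t + ∑ j ∈ Finset.Icc 1 (k + 1), H j t • v (j + 2) t := by
    funext t
    rw [Finset.sum_Icc_succ_top (by omega)]
    rw [add_assoc]
  rw [show ((fun t => v 1 t + ∑ j ∈ Finset.Icc 1 k, H j t • v (j + 2) t) + H (k + 1) • v (k + 3)) = _ from hfun] at hsum
  refine hsum.congr_deriv ?_
  module
end

section
/- Let {v₁,…,vₙ} be a Frenet frame in Eⁿ with nowhere-vanishing curvatures. If the curve is a generalized helix with axis X (a constant unit vector with ⟨v₁, X⟩ = cos φ ≠ 0 constant), then the generalized Darboux vector D = v₁ + Σ_{j=1}^{n-2} Hⱼ v_{j+2} satisfies X = cos φ · D, hence D is a constant vector field (D' = 0). -/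
/-- If the curve is a generalized helix with axis X, then X = cos φ · D and the
generalized Darboux vector D is constant (D' = 0). -/
theorem helix_implies_darboux_constant
    (n : ℕ) (hn : 3 ≤ n)
    (v : ℕ → ℝ → EuclideanSpace ℝ (Fin n)) (κ H : ℕ → ℝ → ℝ)
    (hκ0 : ∀ j, 1 ≤ j → j ≤ n - 1 → ∀ s, κ j s ≠ 0)
    (hκsmooth : ∀ j, ContDiff ℝ (⊤ : ℕ∞) (κ j))
    (horth : ∀ s, ∀ i j, 1 ≤ i → i ≤ n → 1 ≤ j → j ≤ n →
      (inner ℝ (v i s) (v j s) : ℝ) = if i = j then 1 else 0)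
    (hfrenet1 : ∀ s, HasDerivAt (v 1) (κ 1 s • v 2 s) s)
    (hfrenetmid : ∀ i, 1 < i → i < n → ∀ s,
      HasDerivAt (v i) (-(κ (i - 1) s) • v (i - 1) s + κ i s • v (i + 1) s) s)
    (hfrenetn : ∀ s, HasDerivAt (v n) (-(κ (n - 1) s) • v (n - 1) s) s)
    (hH0 : H 0 = 0)
    (hH1 : H 1 = fun s => κ 1 s / κ 2 s)
    (hHrec : ∀ i, 2 ≤ i → i ≤ n - 2 →
      H i = fun s => (deriv (H (i - 1)) s + H (i - 2) s * κ i s) / κ (i + 1) s)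
    (X : EuclideanSpace ℝ (Fin n)) (hX : ‖X‖ = 1) (φ : ℝ)
    (hφ : Real.cos φ ≠ 0)
    (haxis : ∀ s, (inner ℝ (v 1 s) X : ℝ) = Real.cos φ)
    (D : ℝ → EuclideanSpace ℝ (Fin n))
    (hD : ∀ s, D s = v 1 s + ∑ j ∈ Finset.Icc 1 (n - 2), H j s • v (j + 2) s) :
    (∀ s, X = Real.cos φ • D s) ∧ (∀ s, deriv D s = 0) := by
  obtain ⟨m, rfl⟩ : ∃ m, n = m + 3 := ⟨n - 3, by omega⟩
  -- derivative of a_i = ⟨v_i, X⟩ for middle indices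
  have hmid : ∀ i s, 1 < i → i < m + 3 →
      HasDerivAt (fun t => (inner ℝ (v i t) X : ℝ))
        (-(κ (i - 1) s) * inner ℝ (v (i - 1) s) X + κ i s * inner ℝ (v (i + 1) s) X) s := by
    intro i s h1 h2
    have h := (hfrenetmid i h1 h2 s).inner ℝ (hasDerivAt_const s X)
    simpa only [inner_zero_right, zero_add, add_zero, inner_add_left, inner_neg_left,
      real_inner_smul_left, neg_mul, neg_smul] using h
  -- key induction: ⟨v_{j+2}, X⟩ = H_j cos φ
  have key : ∀ j, j ≤ m + 1 → ∀ s, (inner ℝ (v (j + 2) s) X : ℝ) = H j s * Real.cos φ := by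
    intro j
    induction j using Nat.strong_induction_on with
    | _ j ih =>
      intro hj s
      match j, ih with
      | 0, ih =>
        have h1 : HasDerivAt (fun t => (inner ℝ (v 1 t) X : ℝ))
            (κ 1 s * inner ℝ (v 2 s) X) s := by
          have h := (hfrenet1 s).inner ℝ (hasDerivAt_const s X)
          simpa only [inner_zero_right, zero_add, add_zero, real_inner_smul_left] using h
        have h2 : HasDerivAt (fun t => (inner ℝ (v 1 t) X : ℝ)) 0 s := by
          have : (fun t => (inner ℝ (v 1 t) X : ℝ)) = fun _ => Real.cos φ := funext haxis
          rw [this]; exact hasDerivAt_const s _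
        have h0 := h1.unique h2
        have hκ1 : κ 1 s ≠ 0 := hκ0 1 le_rfl (by omega) s
        have h3 : (inner ℝ (v 2 s) X : ℝ) = 0 := by
          rcases mul_eq_zero.mp h0 with h | h
          · exact absurd h hκ1
          · exact h
        rw [show (0:ℕ) + 2 = 2 from rfl, h3, hH0]
        simp
      | 1, ih =>
        have ha2 : (fun t => (inner ℝ (v 2 t) X : ℝ)) = fun _ => 0 := by
          funext t
          have h := ih 0 (by omega) (by omega) t
          rw [hH0] at h
          simpa using h
        have h1 := hmid 2 s (by omega) (by omega)
        have h2 : HasDerivAt (fun t => (inner ℝ (v 2 t) X : ℝ)) 0 s := by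
          rw [ha2]; exact hasDerivAt_const s _
        have h0 := h1.unique h2
        rw [show (2:ℕ) - 1 = 1 from rfl, show (2:ℕ) + 1 = 3 from rfl, haxis s] at h0
        have hκ2 : κ 2 s ≠ 0 := hκ0 2 (by omega) (by omega) s
        have h3 : (inner ℝ (v 3 s) X : ℝ) = κ 1 s * Real.cos φ / κ 2 s := by
          rw [eq_div_iff hκ2]; linarith
        rw [hH1, show (1:ℕ) + 2 = 3 from rfl, h3]
        ring
      | (i + 2), ih =>
        have ha : (fun t => (inner ℝ (v (i + 3) t) X : ℝ)) = fun t => H (i + 1) t * Real.cos φ := by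
          funext t; exact ih (i + 1) (by omega) (by omega) t
        have h1 := hmid (i + 3) s (by omega) (by omega)
        rw [show i + 3 - 1 = i + 2 from rfl] at h1
        set d : ℝ := -(κ (i + 2) s) * inner ℝ (v (i + 2) s) X
            + κ (i + 3) s * inner ℝ (v (i + 3 + 1) s) X with hd'
        have h2 : HasDerivAt (H (i + 1)) (d / Real.cos φ) s := by
          have h3 : HasDerivAt (fun t => H (i + 1) t * Real.cos φ) d s := by
            rw [← ha]; exact h1
          have h4 := h3.div_const (Real.cos φ)
          have h5 : (fun t => H (i + 1) t * Real.cos φ / Real.cos φ) = H (i + 1) := by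
            funext t; field_simp
          rwa [h5] at h4
        have hderiv : deriv (H (i + 1)) s = d / Real.cos φ := h2.deriv
        have hrec := hHrec (i + 2) (by omega) (by omega)
        have hrec' : H (i + 2) s
            = (deriv (H (i + 1)) s + H i s * κ (i + 2) s) / κ (i + 3) s := by
          rw [hrec]
          simp only [show i + 2 - 1 = i + 1 from rfl, show i + 2 - 2 = i from rfl,
            show i + 2 + 1 = i + 3 from rfl]
        have hai : (inner ℝ (v (i + 2) s) X : ℝ) = H i s * Real.cos φ :=
          ih i (by omega) (by omega) s
        have hκ3 : κ (i + 3) s ≠ 0 := hκ0 (i + 3) (by omega) (by omega) s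
        rw [show i + 2 + 2 = i + 3 + 1 from rfl]
        rw [hrec', hderiv, hd', hai]
        set A : ℝ := inner ℝ (v (i + 3 + 1) s) X with hA
        field_simp
        ring
  have hpart1 : ∀ s, X = Real.cos φ • D s := by
    intro s
    set b : Fin (m + 3) → EuclideanSpace ℝ (Fin (m + 3)) := fun i => v (i + 1) s with hb'
    have hb : Orthonormal ℝ b := by
      rw [orthonormal_iff_ite]
      intro i j
      have h := horth s (i + 1) (j + 1) (by omega) (by omega) (by omega) (by omega)
      rw [hb']
      simp only []
      rw [h]
      by_cases hij : i = j
      · simp [hij]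
      · have hne : (i : ℕ) + 1 ≠ (j : ℕ) + 1 := by
          simp only [Fin.ext_iff] at hij; omega
        simp [hij, hne, Fin.val_inj]
    have hcard : Fintype.card (Fin (m + 3))
        = Module.finrank ℝ (EuclideanSpace ℝ (Fin (m + 3))) := by
      simp [finrank_euclideanSpace_fin]
    have hspan := hb.linearIndependent.span_eq_top_of_card_eq_finrank hcard
    have hX' := (OrthonormalBasis.mk hb hspan.ge).sum_repr' X
    simp only [OrthonormalBasis.coe_mk, hb'] at hX'
    have hX'' : ∑ i ∈ Finset.range (m + 3), (inner ℝ (v (i + 1) s) X : ℝ) • v (i + 1) s = X := by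
      rw [← Fin.sum_univ_eq_sum_range (fun i => (inner ℝ (v (i + 1) s) X : ℝ) • v (i + 1) s) (m + 3)]
      exact hX'
    rw [← hX'', hD s]
    rw [Finset.sum_range_succ' _ (m + 2), Finset.sum_range_succ' _ (m + 1)]
    have hf0 : (inner ℝ (v (0 + 1) s) X : ℝ) • v (0 + 1) s = Real.cos φ • v 1 s := by
      rw [show (0:ℕ) + 1 = 1 from rfl, haxis s]
    have hf1 : (inner ℝ (v (1 + 1) s) X : ℝ) • v (1 + 1) s = 0 := by
      have h := key 0 (by omega) s
      rw [hH0] at h; simp only [Pi.zero_apply, zero_mul] at h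
      rw [show (1:ℕ) + 1 = 0 + 2 from rfl, h, zero_smul]
    rw [hf0, hf1]
    have hsum : ∑ k ∈ Finset.range (m + 1), (inner ℝ (v (k + 1 + 1 + 1) s) X : ℝ) • v (k + 1 + 1 + 1) s
        = ∑ j ∈ Finset.Icc 1 (m + 3 - 2), Real.cos φ • (H j s • v (j + 2) s) := by
      rw [show m + 3 - 2 = m + 1 from rfl, ← Finset.Ico_add_one_right_eq_Icc, Finset.sum_Ico_eq_sum_range]
      apply Finset.sum_congr (by norm_num)
      intro k hk
      simp only [Finset.mem_range] at hk
      have h := key (k + 1) (by omega) s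
      rw [show (1:ℕ) + k = k + 1 by omega, show k + 1 + 1 + 1 = k + 1 + 2 from rfl, h,
        smul_smul, mul_comm (Real.cos φ) (H (k + 1) s)]
    rw [hsum, smul_add, Finset.smul_sum]
    abel
  refine ⟨hpart1, fun s => ?_⟩
  have hDconst : D = fun _ => (Real.cos φ)⁻¹ • X := by
    funext t
    rw [hpart1 t, smul_smul, inv_mul_cancel₀ hφ, one_smul]
  rw [hDconst]
  simp
end

section
/- Let n = 2m+1 and let κ₁,…,κ_{2m} be smooth nowhere-zero curvature functions with harmonic curvatures H₀ = 0, H₁ = κ₁/κ₂, Hᵢ = (H'_{i-1} + H_{i-2}κᵢ)/κ_{i+1}. If all ratios κ₁/κ₂, κ₃/κ₄, …, κ_{2m-1}/κ_{2m} are constant, then the helix condition H'_{n-2} + κ_{n-1}H_{n-3} = 0 holds, i.e. H'_{2m-1} + κ_{2m}·H_{2m-2} = 0 identically. -/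
/-- In odd dimension n = 2m+1, constant odd/even curvature ratios imply the
LC-helix condition H'_{2m-1} + κ_{2m}·H_{2m-2} = 0. -/
theorem odd_dim_constant_ratios_helix_condition
    (m : ℕ) (hm : 1 ≤ m) (H κ : ℕ → ℝ → ℝ)
    (hH0 : H 0 = 0)
    (hH1 : H 1 = fun s => κ 1 s / κ 2 s)
    (hHrec : ∀ i, 2 ≤ i →
      H i = fun s => (deriv (H (i - 1)) s + H (i - 2) s * κ i s) / κ (i + 1) s)
    (hκ0 : ∀ j s, κ j s ≠ 0)
    (hκsmooth : ∀ j, ContDiff ℝ (⊤ : ℕ∞) (κ j))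
    (hconst : ∀ i, 1 ≤ i → i ≤ m → ∃ c : ℝ, ∀ s, κ (2 * i - 1) s / κ (2 * i) s = c) :
    ∀ s, deriv (H (2 * m - 1)) s + κ (2 * m) s * H (2 * m - 2) s = 0 := by
  have key : ∀ k, 1 ≤ k → k ≤ m →
      H (2 * k - 2) = 0 ∧ ∃ c : ℝ, H (2 * k - 1) = fun _ => c := by
    intro k hk
    induction k, hk using Nat.le_induction with
    | base =>
      intro _
      refine ⟨by simpa using hH0, ?_⟩
      obtain ⟨c, hc⟩ := hconst 1 le_rfl hm
      refine ⟨c, ?_⟩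
      have : (2 : ℕ) * 1 - 1 = 1 := by norm_num
      rw [this, hH1]
      funext s
      simpa using hc s
    | succ k hk ih =>
      intro hkm
      obtain ⟨h0, c, hc⟩ := ih (by omega)
      have hHeven : H (2 * k) = 0 := by
        have hr := hHrec (2 * k) (by omega)
        have e1 : 2 * k - 1 = 2 * k - 1 := rfl
        funext s
        rw [hr]
        simp only [hc, h0]
        simp
      have e2 : 2 * (k + 1) - 2 = 2 * k := by omega
      have e3 : 2 * (k + 1) - 1 = 2 * k + 1 := by omega
      refine ⟨by rw [e2]; exact hHeven, ?_⟩
      obtain ⟨d, hd⟩ := hconst (k + 1) (by omega) hkm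
      have e4 : 2 * (k + 1) - 1 = 2 * k + 1 := by omega
      have e5 : 2 * (k + 1) = 2 * k + 2 := by omega
      rw [e4, e5] at hd
      refine ⟨c * d, ?_⟩
      rw [e3, hHrec (2 * k + 1) (by omega)]
      funext s
      have e6 : 2 * k + 1 - 1 = 2 * k := by omega
      have e7 : 2 * k + 1 - 2 = 2 * k - 1 := by omega
      rw [e6, e7, hHeven, hc]
      have hd0 : deriv (0 : ℝ → ℝ) s = 0 := by
        rw [show (0 : ℝ → ℝ) = fun _ => (0:ℝ) from rfl]; exact deriv_const s 0
      rw [hd0, zero_add, show 2 * k + 1 + 1 = 2 * k + 2 from by omega,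
        mul_div_assoc, hd s]
  obtain ⟨h0, c, hc⟩ := key m hm le_rfl
  intro s
  rw [hc, h0]
  simp
end

section
/- Let {v₁,…,vₙ} be a Frenet frame (orthonormal at each s) in Eⁿ satisfying the Frenet ODEs with nowhere-vanishing curvatures, and let X be a constant unit vector with ⟨v₁, X⟩ = cos φ ≠ 0 constant. Then Σ_{j=1}^{n-2} Hⱼ(s)² = (1 - cos²φ)/cos²φ for every s; in particular, the quantity 1 + Σⱼ Hⱼ² equals 1/cos²φ = sec²φ. -/
open Finset

/-- For a generalized helix with axis X and constant angle φ (cos φ ≠ 0),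
Σ Hⱼ² = (1 - cos²φ)/cos²φ, and 1 + Σ Hⱼ² = 1/cos²φ. -/
theorem helix_sum_squares_sec
    (n : ℕ) (hn : 3 ≤ n)
    (v : ℕ → ℝ → EuclideanSpace ℝ (Fin n)) (κ H : ℕ → ℝ → ℝ)
    (hκ0 : ∀ j, 1 ≤ j → j ≤ n - 1 → ∀ s, κ j s ≠ 0)
    (hκsmooth : ∀ j, ContDiff ℝ (⊤ : ℕ∞) (κ j))
    (horth : ∀ s, ∀ i j, 1 ≤ i → i ≤ n → 1 ≤ j → j ≤ n →
      (inner ℝ (v i s) (v j s) : ℝ) = if i = j then 1 else 0)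
    (hfrenet1 : ∀ s, HasDerivAt (v 1) (κ 1 s • v 2 s) s)
    (hfrenetmid : ∀ i, 1 < i → i < n → ∀ s,
      HasDerivAt (v i) (-(κ (i - 1) s) • v (i - 1) s + κ i s • v (i + 1) s) s)
    (hfrenetn : ∀ s, HasDerivAt (v n) (-(κ (n - 1) s) • v (n - 1) s) s)
    (hH0 : H 0 = 0)
    (hH1 : H 1 = fun s => κ 1 s / κ 2 s)
    (hHrec : ∀ i, 2 ≤ i → i ≤ n - 2 →
      H i = fun s => (deriv (H (i - 1)) s + H (i - 2) s * κ i s) / κ (i + 1) s)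
    (X : EuclideanSpace ℝ (Fin n)) (hX : ‖X‖ = 1) (φ : ℝ)
    (hφ : Real.cos φ ≠ 0)
    (haxis : ∀ s, (inner ℝ (v 1 s) X : ℝ) = Real.cos φ) :
    ∀ s, (∑ j ∈ Finset.Icc 1 (n - 2), (H j s) ^ 2
            = (1 - Real.cos φ ^ 2) / Real.cos φ ^ 2) ∧
         (1 + ∑ j ∈ Finset.Icc 1 (n - 2), (H j s) ^ 2 = 1 / Real.cos φ ^ 2) := by
  set c := Real.cos φ with hcdef
  set a : ℕ → ℝ → ℝ := fun i s => (inner ℝ (v i s) X : ℝ) with hadef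
  -- derivative of a i for middle indices
  have ha_deriv : ∀ i, 1 < i → i < n → ∀ s,
      HasDerivAt (a i) (-(κ (i - 1) s) * a (i - 1) s + κ i s * a (i + 1) s) s := by
    intro i h1 h2 s
    have h := (hfrenetmid i h1 h2 s).inner ℝ (hasDerivAt_const s X)
    simpa only [a, inner_add_left, real_inner_smul_left, inner_zero_right, zero_add] using h
  -- a 2 vanishes
  have ha2 : ∀ s, a 2 s = 0 := by
    intro s
    have h1 : HasDerivAt (a 1) 0 s := by
      have : a 1 = fun _ => c := funext haxis
      rw [this]; exact hasDerivAt_const s c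
    have h2 : HasDerivAt (a 1) (κ 1 s * a 2 s) s := by
      have h := (hfrenet1 s).inner ℝ (hasDerivAt_const s X)
      simpa only [a, real_inner_smul_left, inner_zero_right, zero_add] using h
    have h3 := h1.unique h2
    have hκ1 : κ 1 s ≠ 0 := hκ0 1 le_rfl (by omega) s
    field_simp at h3
    exact (mul_eq_zero.mp h3.symm).resolve_left hκ1
  -- key: a (i+2) = c * H i
  have key : ∀ i, i ≤ n - 2 → ∀ s, a (i + 2) s = c * H i s := by
    intro i
    induction i using Nat.strong_induction_on with
    | _ i ih =>
      intro hi s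
      match i with
      | 0 => simp [hH0, ha2 s]
      | 1 =>
        have hd : HasDerivAt (a 2) (-(κ 1 s) * a 1 s + κ 2 s * a 3 s) s := by
          have := ha_deriv 2 (by omega) (by omega) s
          simpa using this
        have h0 : HasDerivAt (a 2) 0 s := by
          have : a 2 = fun _ => (0 : ℝ) := funext ha2
          rw [this]; exact hasDerivAt_const s 0
        have h3 := h0.unique hd
        have hκ2 : κ 2 s ≠ 0 := hκ0 2 (by omega) (by omega) s
        have ha1 : a 1 s = c := haxis s
        rw [hH1]
        rw [ha1] at h3
        field_simp at h3 ⊢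
        linarith
      | (m + 2) =>
        have him2 : m ≤ n - 2 := by omega
        have him1 : m + 1 ≤ n - 2 := by omega
        have hm : ∀ t, a (m + 2) t = c * H m t := fun t => ih m (by omega) him2 t
        have hm1 : ∀ t, a (m + 3) t = c * H (m + 1) t := fun t => ih (m + 1) (by omega) him1 t
        have hd : HasDerivAt (a (m + 3))
            (-(κ (m + 2) s) * a (m + 2) s + κ (m + 3) s * a (m + 4) s) s := by
          have := ha_deriv (m + 3) (by omega) (by omega) s
          simpa [Nat.add_sub_cancel] using this
        -- rewrite a (m+3) as c * H (m+1)
        have hfun : a (m + 3) = fun t => c * H (m + 1) t := funext hm1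
        rw [hfun] at hd
        have hd2 : HasDerivAt (H (m + 1))
            (c⁻¹ * (-(κ (m + 2) s) * a (m + 2) s + κ (m + 3) s * a (m + 4) s)) s := by
          have h := hd.const_mul c⁻¹
          have : (fun t => c⁻¹ * (c * H (m + 1) t)) = H (m + 1) := by
            funext t; field_simp
          rwa [this] at h
        have hder : deriv (H (m + 1)) s
            = c⁻¹ * (-(κ (m + 2) s) * a (m + 2) s + κ (m + 3) s * a (m + 4) s) :=
          hd2.deriv
        have hrec := hHrec (m + 2) (by omega) hi
        have hrecs : H (m + 2) s
            = (deriv (H (m + 1)) s + H m s * κ (m + 2) s) / κ (m + 3) s := by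
          rw [hrec]; norm_num
        have hκ3 : κ (m + 3) s ≠ 0 := hκ0 (m + 3) (by omega) (by omega) s
        rw [hrecs, hder, hm s]
        field_simp
        ring
  -- Parseval
  have hpars : ∀ s, ∑ i : Fin n, (a (i.val + 1) s) ^ 2 = 1 := by
    intro s
    have hnn : Nonempty (Fin n) := ⟨⟨0, by omega⟩⟩
    have hon : Orthonormal ℝ (fun i : Fin n => v (i.val + 1) s) := by
      rw [orthonormal_iff_ite]
      intro i j
      have h := horth s (i.val + 1) (j.val + 1) (by omega) (by omega) (by omega) (by omega)
      rw [h]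
      simp [Fin.ext_iff]
    have hcard : Fintype.card (Fin n) = Module.finrank ℝ (EuclideanSpace ℝ (Fin n)) := by
      simp
    let bb : OrthonormalBasis (Fin n) ℝ (EuclideanSpace ℝ (Fin n)) :=
      (basisOfOrthonormalOfCardEqFinrank hon hcard).toOrthonormalBasis (by
        rw [coe_basisOfOrthonormalOfCardEqFinrank]; exact hon)
    have hb : ∀ i : Fin n, bb i = v (i.val + 1) s := by
      intro i
      simp [bb, Module.Basis.coe_toOrthonormalBasis, coe_basisOfOrthonormalOfCardEqFinrank]
    have hp := bb.sum_inner_mul_inner X X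
    have hXX : (inner ℝ X X : ℝ) = 1 := by
      rw [real_inner_self_eq_norm_sq, hX]; norm_num
    rw [hXX] at hp
    rw [← hp]
    refine Finset.sum_congr rfl fun i _ => ?_
    rw [hb i]
    have : (inner ℝ X (v (i.val + 1) s) : ℝ) = a (i.val + 1) s := real_inner_comm _ _
    rw [this]
    ring
  intro s
  -- turn Parseval into a statement about the H sum
  have hsum : (1 : ℝ) = c ^ 2 * (∑ j ∈ Finset.Icc 1 (n - 2), (H j s) ^ 2) + c ^ 2 := by
    have h1 := hpars s
    rw [Fin.sum_univ_eq_sum_range (fun k => (a (k + 1) s) ^ 2) n] at h1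
    have hn2 : n - 2 + 2 = n := by omega
    rw [← hn2, Finset.sum_range_succ', Finset.sum_range_succ'] at h1
    have ha1 : a (0 + 1) s = c := haxis s
    have ha2' : a (0 + 1 + 1) s = 0 := ha2 s
    rw [ha1, ha2'] at h1
    have hterm : ∀ k ∈ Finset.range (n - 2),
        (a (k + 1 + 1 + 1) s) ^ 2 = c ^ 2 * (H (k + 1) s) ^ 2 := by
      intro k hk
      rw [Finset.mem_range] at hk
      have : a (k + 1 + 2) s = c * H (k + 1) s := key (k + 1) (by omega) s
      rw [show k + 1 + 1 + 1 = k + 1 + 2 by ring, this]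
      ring
    rw [Finset.sum_congr rfl hterm] at h1
    have hIcc : Finset.Icc 1 (n - 2) = Finset.Ico 1 (n - 2 + 1) := by
      rw [Finset.Ico_add_one_right_eq_Icc]
    rw [hIcc, Finset.sum_Ico_eq_sum_range]
    have : n - 2 + 1 - 1 = n - 2 := by omega
    rw [this, Finset.mul_sum]
    have hre : ∑ i ∈ Finset.range (n - 2), c ^ 2 * (H (1 + i) s) ^ 2
        = ∑ i ∈ Finset.range (n - 2), c ^ 2 * (H (i + 1) s) ^ 2 := by
      refine Finset.sum_congr rfl fun i _ => by rw [Nat.add_comm]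
    rw [hre]
    linarith
  have hc2 : c ^ 2 ≠ 0 := pow_ne_zero _ hφ
  constructor
  · field_simp
    linarith
  · field_simp
    linarith
end
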